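/- Let T be a labelled transition system with finite state set S. The recursive fixpoint-iteration procedure sem, defined by sem(X,η)=η(X), sem(μX.φ,η)=iter_X(φ,η,∅), sem(νX.φ,η)=iter_X(φ,η,S), sem(φ₁∧φ₂,η)=sem(φ₁,η)∩sem(φ₂,η), sem(φ₁∨φ₂,η)=sem(φ₁,η)∪sem(φ₂,η), sem([a]φ,η)=p͠re(→ᵃ)(sem(φ,η)), sem(⟨a⟩φ,η)=pre(→ᵃ)(sem(φ,η)), where iter_X(φ,η,U) = (if U = sem(φ,η[X:=U]) then U else iter_X(φ,η,sem(φ,η[X:=U]))), terminates and computes the semantics: sem(φ,η) = ⟦φ⟧η for every formula φ and environment η with FV(φ) ⊆ dom(η). -/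

import Mathlib

set_option maxHeartbeats 1000000

namespace MuCalc

attribute [local instance] Classical.propDecidable

/-- μ-calculus formulas. -/
inductive Formula (Var : Type*) (Prp : Type*) (Act : Type*) where
  | var : Var → Formula Var Prp Act
  | prop : Prp → Formula Var Prp Act
  | dia : Act → Formula Var Prp Act → Formula Var Prp Act
  | box : Act → Formula Var Prp Act → Formula Var Prp Act
  | and : Formula Var Prp Act → Formula Var Prp Act → Formula Var Prp Act
  | or : Formula Var Prp Act → Formula Var Prp Act → Formula Var Prp Act
  | mu : Var → Formula Var Prp Act → Formula Var Prp Act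
  | nu : Var → Formula Var Prp Act → Formula Var Prp Act

namespace Formula

variable {Var Prp Act : Type*}

/-- Free variables. -/
noncomputable def FV : Formula Var Prp Act → Finset Var
  | var X => {X}
  | prop _ => ∅
  | dia _ φ => FV φ
  | box _ φ => FV φ
  | and φ ψ => FV φ ∪ FV ψ
  | or φ ψ => FV φ ∪ FV ψ
  | mu X φ => FV φ \ {X}
  | nu X φ => FV φ \ {X}

/-- Substitution of a formula for the free occurrences of a variable. -/
noncomputable def subst : Formula Var Prp Act → Var → Formula Var Prp Act → Formula Var Prp Act
  | var Y, X, ρ => if Y = X then ρ else var Y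
  | prop P, _, _ => prop P
  | dia a φ, X, ρ => dia a (subst φ X ρ)
  | box a φ, X, ρ => box a (subst φ X ρ)
  | and φ ψ, X, ρ => and (subst φ X ρ) (subst ψ X ρ)
  | or φ ψ, X, ρ => or (subst φ X ρ) (subst ψ X ρ)
  | mu Y φ, X, ρ => if Y = X then mu Y φ else mu Y (subst φ X ρ)
  | nu Y φ, X, ρ => if Y = X then nu Y φ else nu Y (subst φ X ρ)

/-- Nesting depth `nd(X, φ)` of a variable in a formula. -/
noncomputable def ndVar (X : Var) : Formula Var Prp Act → ℕ
  | var _ => 0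
  | prop _ => 0
  | dia _ φ => ndVar X φ
  | box _ φ => ndVar X φ
  | and φ ψ => max (ndVar X φ) (ndVar X ψ)
  | or φ ψ => max (ndVar X φ) (ndVar X ψ)
  | mu Y φ => if X ≠ Y ∧ X ∈ FV φ then max (1 + ndVar Y φ) (ndVar X φ) else 0
  | nu Y φ => if X ≠ Y ∧ X ∈ FV φ then max (1 + ndVar Y φ) (ndVar X φ) else 0

/-- Nesting depth `nd(φ)` of a formula: `nd(QX.φ) = 1 + nd(X,φ)` and `0` otherwise. -/
noncomputable def nd : Formula Var Prp Act → ℕ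
  | mu X φ => 1 + ndVar X φ
  | nu X φ => 1 + ndVar X φ
  | _ => 0

/-- The dual of a formula. -/
def dual : Formula Var Prp Act → Formula Var Prp Act
  | var X => var X
  | prop P => prop P
  | dia a φ => box a (dual φ)
  | box a φ => dia a (dual φ)
  | and φ ψ => or (dual φ) (dual ψ)
  | or φ ψ => and (dual φ) (dual ψ)
  | mu X φ => nu X (dual φ)
  | nu X φ => mu X (dual φ)

/-- A fixpoint formula `QX.φ` with `Q ∈ {μ, ν}`: `fp true = μ`, `fp false = ν`. -/
def fp (q : Bool) (X : Var) (φ : Formula Var Prp Act) : Formula Var Prp Act :=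
  if q then mu X φ else nu X φ

/-- The (reflexive, transitive) subformula relation. -/
inductive Subformula : Formula Var Prp Act → Formula Var Prp Act → Prop
  | refl (φ) : Subformula φ φ
  | dia {ρ φ} (a : Act) : Subformula ρ φ → Subformula ρ (dia a φ)
  | box {ρ φ} (a : Act) : Subformula ρ φ → Subformula ρ (box a φ)
  | and_left {ρ φ ψ} : Subformula ρ φ → Subformula ρ (and φ ψ)
  | and_right {ρ φ ψ} : Subformula ρ ψ → Subformula ρ (and φ ψ)
  | or_left {ρ φ ψ} : Subformula ρ φ → Subformula ρ (or φ ψ)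
  | or_right {ρ φ ψ} : Subformula ρ ψ → Subformula ρ (or φ ψ)
  | mu {ρ φ} (X : Var) : Subformula ρ φ → Subformula ρ (mu X φ)
  | nu {ρ φ} (X : Var) : Subformula ρ φ → Subformula ρ (nu X φ)

end Formula

/-- A labelled transition system: a family of total transition relations and
a labelling of states with the atomic propositions true there. -/
structure LTS (S : Type*) (Prp : Type*) (Act : Type*) where
  trans : Act → S → S → Prop
  total : ∀ a s, ∃ t, trans a s t
  label : S → Set Prp

variable {S Var Prp Act : Type*}

/-- The semantics `⟦φ⟧η ⊆ S`, with least/greatest fixpoints given by Knaster–Tarski. -/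
noncomputable def LTS.sem (T : LTS S Prp Act) :
    Formula Var Prp Act → (Var → Set S) → Set S
  | .var X, η => η X
  | .prop P, _ => {s | P ∈ T.label s}
  | .dia a φ, η => {s | ∃ t, T.trans a s t ∧ t ∈ T.sem φ η}
  | .box a φ, η => {s | ∀ t, T.trans a s t → t ∈ T.sem φ η}
  | .and φ ψ, η => T.sem φ η ∩ T.sem ψ η
  | .or φ ψ, η => T.sem φ η ∪ T.sem ψ η
  | .mu X φ, η => sInf {U : Set S | T.sem φ (Function.update η X U) ⊆ U}
  | .nu X φ, η => sSup {U : Set S | U ⊆ T.sem φ (Function.update η X U)}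

/-- A parity game: positions owned by Player 0 and Player 1, a total edge
relation, and a priority function. -/
structure ParityGame (Pos : Type*) where
  owner : Pos → Fin 2
  edge : Pos → Pos → Prop
  total : ∀ p, ∃ q, edge p q
  priority : Pos → ℕ

namespace ParityGame

variable {Pos : Type*}

/-- A strategy for player `i`: given the history (the earlier positions of the
play, in order) and the current position, pick a move; all prescribed moves
must follow edges when the current position belongs to player `i`. -/
structure Strategy (G : ParityGame Pos) (i : Fin 2) where
  move : List Pos → Pos → Pos
  valid : ∀ h p, G.owner p = i → G.edge p (move h p)

/-- A strategy is positional if its moves only depend on the current position. -/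
def Strategy.Positional {G : ParityGame Pos} {i : Fin 2} (σ : G.Strategy i) : Prop :=
  ∀ h h' p, σ.move h p = σ.move h' p

/-- The play determined by a joint move function `f` (history, current ↦ next):
current position together with the history. -/
def playHist (f : List Pos → Pos → Pos) (p : Pos) : ℕ → Pos × List Pos
  | 0 => (p, [])
  | n + 1 =>
    let q := playHist f p n
    (f q.2 q.1, q.2 ++ [q.1])

/-- The infinite play determined by a joint move function. -/
def play (f : List Pos → Pos → Pos) (p : Pos) (n : ℕ) : Pos :=
  (playHist f p n).1

/-- The joint move function of a strategy for player `i` and a counterstrategy. -/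
def Strategy.combine {G : ParityGame Pos} {i : Fin 2} (σ : G.Strategy i)
    (τ : G.Strategy (1 - i)) : List Pos → Pos → Pos :=
  fun h p => if G.owner p = i then σ.move h p else τ.move h p

/-- An infinite sequence of positions is a play if successive positions follow edges. -/
def IsPlay (G : ParityGame Pos) (f : ℕ → Pos) : Prop :=
  ∀ n, G.edge (f n) (f (n + 1))

/-- The largest priority occurring infinitely often in an infinite play. -/
noncomputable def maxInfPriority (G : ParityGame Pos) (f : ℕ → Pos) : ℕ :=
  sSup {k | {n | G.priority (f n) = k}.Infinite}

/-- Player `i` wins the infinite play `f`: the largest priority occurring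
infinitely often has parity `i`. -/
def WinsPlaySeq (G : ParityGame Pos) (i : Fin 2) (f : ℕ → Pos) : Prop :=
  G.maxInfPriority f % 2 = i.val

/-- `σ` (for player `i`) wins the play from `p` against counterstrategy `τ`. -/
def Strategy.WinsAgainst {G : ParityGame Pos} {i : Fin 2} (σ : G.Strategy i)
    (τ : G.Strategy (1 - i)) (p : Pos) : Prop :=
  G.WinsPlaySeq i (play (σ.combine τ) p)

/-- `σ` is a winning strategy for player `i` from position `p`. -/
def Strategy.WinsFrom {G : ParityGame Pos} {i : Fin 2} (σ : G.Strategy i) (p : Pos) : Prop :=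
  ∀ τ : G.Strategy (1 - i), σ.WinsAgainst τ p

/-- Player `i` wins from position `p`. -/
def WinsFrom (G : ParityGame Pos) (i : Fin 2) (p : Pos) : Prop :=
  ∃ σ : G.Strategy i, σ.WinsFrom p

end ParityGame

/-- Ownership of positions in the game `G(T,η)`: opponent (Player 1) moves at
conjunctions and boxes, proponent (Player 0) everywhere else. -/
def gameOwner : S × Formula Var Prp Act → Fin 2
  | (_, .and _ _) => 1
  | (_, .box _ _) => 1
  | _ => 0

/-- The moves of the game `G(T,η)`. -/
noncomputable def gameMove (T : LTS S Prp Act) :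
    S × Formula Var Prp Act → S × Formula Var Prp Act → Prop
  | (s, .or φ ψ), q => q = (s, φ) ∨ q = (s, ψ)
  | (s, .and φ ψ), q => q = (s, φ) ∨ q = (s, ψ)
  | (s, .dia a φ), q => q.2 = φ ∧ T.trans a s q.1
  | (s, .box a φ), q => q.2 = φ ∧ T.trans a s q.1
  | (s, .mu X φ), q => q = (s, Formula.subst φ X (.mu X φ))
  | (s, .nu X φ), q => q = (s, Formula.subst φ X (.nu X φ))
  | (s, .var X), q => q = (s, .var X)
  | (s, .prop P), q => q = (s, .prop P)

/-- The priorities of the game `G(T,η)`. -/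
noncomputable def gamePriority (T : LTS S Prp Act) (η : Var → Set S) :
    S × Formula Var Prp Act → ℕ
  | (_, .mu X φ) => 2 * Formula.nd (Formula.mu X φ) + 1
  | (_, .nu X φ) => 2 * Formula.nd (Formula.nu X φ)
  | (s, .prop P) => if P ∈ T.label s then 0 else 1
  | (s, .var X) => if s ∈ η X then 0 else 1
  | (_, _) => 0

/-- The parity game `G(T,η)` associated with an LTS `T` and environment `η`. -/
noncomputable def LTS.game (T : LTS S Prp Act) (η : Var → Set S) :
    ParityGame (S × Formula Var Prp Act) where
  owner := gameOwner
  edge := gameMove T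
  total := by
    rintro ⟨s, φ⟩
    cases φ with
    | var X => exact ⟨(s, .var X), rfl⟩
    | prop P => exact ⟨(s, .prop P), rfl⟩
    | dia a φ => obtain ⟨t, ht⟩ := T.total a s; exact ⟨(t, φ), rfl, ht⟩
    | box a φ => obtain ⟨t, ht⟩ := T.total a s; exact ⟨(t, φ), rfl, ht⟩
    | and φ ψ => exact ⟨(s, φ), Or.inl rfl⟩
    | or φ ψ => exact ⟨(s, φ), Or.inl rfl⟩
    | mu X φ => exact ⟨(s, Formula.subst φ X (.mu X φ)), rfl⟩
    | nu X φ => exact ⟨(s, Formula.subst φ X (.nu X φ)), rfl⟩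
  priority := gamePriority T η

/-- The advice values `{1, 2, *} ∪ S` of a partial winning strategy. -/
inductive Advice (S : Type*) where
  | one : Advice S
  | two : Advice S
  | star : Advice S
  | state : S → Advice S

/-- A partial strategy: a partial function from positions of `G(T,η)` to advice. -/
def PStrat (S Var Prp Act : Type*) :=
  S × Formula Var Prp Act → Option (Advice S)

/-- The domain of a partial strategy. -/
def PStrat.dom (sg : PStrat S Var Prp Act) : Set (S × Formula Var Prp Act) :=
  {q | sg q ≠ none}

/-- The move function of the Player-0 strategy induced by a partial strategy:
follow the advice where present (and sensible), move arbitrarily elsewhere. -/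
noncomputable def inducedMove (T : LTS S Prp Act) (sg : PStrat S Var Prp Act) :
    S × Formula Var Prp Act → S × Formula Var Prp Act
  | (s, .var X) => (s, .var X)
  | (s, .prop P) => (s, .prop P)
  | (s, .and φ ψ) => (s, φ)
  | (s, .or φ ψ) => if sg (s, .or φ ψ) = some .two then (s, ψ) else (s, φ)
  | (s, .box a φ) => ((T.total a s).choose, φ)
  | (s, .dia a φ) =>
    if h : ∃ t, sg (s, .dia a φ) = some (.state t) ∧ T.trans a s t then (h.choose, φ)
    else ((T.total a s).choose, φ)
  | (s, .mu X φ) => (s, Formula.subst φ X (.mu X φ))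
  | (s, .nu X φ) => (s, Formula.subst φ X (.nu X φ))

/-- The Player-0 strategy induced by a partial strategy. -/
noncomputable def inducedStrategy (T : LTS S Prp Act) (η : Var → Set S)
    (sg : PStrat S Var Prp Act) : (T.game η).Strategy 0 where
  move := fun _ p => inducedMove T sg p
  valid := by
    rintro h ⟨s, φ⟩ _
    show gameMove T (s, φ) (inducedMove T sg (s, φ))
    cases φ with
    | var X => exact rfl
    | prop P => exact rfl
    | and φ ψ => exact Or.inl rfl
    | or φ ψ =>
      show inducedMove T sg (s, .or φ ψ) = (s, φ) ∨ inducedMove T sg (s, .or φ ψ) = (s, ψ)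
      rw [inducedMove]
      split
      · exact Or.inr rfl
      · exact Or.inl rfl
    | box a φ => exact ⟨rfl, (T.total a s).choose_spec⟩
    | dia a φ =>
      show (inducedMove T sg (s, .dia a φ)).2 = φ ∧ T.trans a s (inducedMove T sg (s, .dia a φ)).1
      rw [inducedMove]
      split
      next hh => exact ⟨rfl, hh.choose_spec.2⟩
      next => exact ⟨rfl, (T.total a s).choose_spec⟩
    | mu X φ => exact rfl
    | nu X φ => exact rfl

/-- A partial winning strategy for the game `G(T,η)` (conditions STAR, OR, DIA, WIN). -/
structure IsPWS (T : LTS S Prp Act) (η : Var → Set S) (sg : PStrat S Var Prp Act) : Prop where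
  star : ∀ s (φ : Formula Var Prp Act), sg (s, φ) = some .star →
    ∀ q, gameMove T (s, φ) q → sg q ≠ none
  or_one : ∀ s (φ : Formula Var Prp Act), sg (s, φ) = some .one →
    ∃ φ₁ φ₂, φ = Formula.or φ₁ φ₂ ∧ sg (s, φ₁) ≠ none
  or_two : ∀ s (φ : Formula Var Prp Act), sg (s, φ) = some .two →
    ∃ φ₁ φ₂, φ = Formula.or φ₁ φ₂ ∧ sg (s, φ₂) ≠ none
  dia : ∀ s (φ : Formula Var Prp Act) t, sg (s, φ) = some (.state t) →
    ∃ a ψ, φ = Formula.dia a ψ ∧ T.trans a s t ∧ sg (t, ψ) ≠ none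
  win : ∀ q ∈ PStrat.dom sg, (inducedStrategy T η sg).WinsFrom q

/-- The sum `Σ + Σ'` of two partial strategies, preferring the left one. -/
def pwsAdd (sg sg' : PStrat S Var Prp Act) : PStrat S Var Prp Act :=
  fun q => (sg q).orElse (fun _ => sg' q)

/-- The substitution-composition `Σ[X:=φ, Σ']` of partial strategies. -/
noncomputable def pwsSubst (sg : PStrat S Var Prp Act) (X : Var)
    (φ : Formula Var Prp Act) (sg' : PStrat S Var Prp Act) : PStrat S Var Prp Act :=
  fun q =>
    (sg' q).orElse (fun _ =>
      if h : ∃ ψ, q.2 = Formula.subst ψ X φ ∧ sg (q.1, ψ) ≠ none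
      then sg (q.1, h.choose) else none)

/-- The instrumented fixpoint iteration `SEM(φ)_η`, computing a partial
winning strategy by fixpoint iteration. -/
noncomputable def SEM [Fintype S] (T : LTS S Prp Act) :
    Formula Var Prp Act → (Var → Set S) → PStrat S Var Prp Act
  | .var X, η => fun q => if q.2 = Formula.var X ∧ q.1 ∈ η X then some .star else none
  | .prop P, _ => fun q => if q.2 = Formula.prop P ∧ P ∈ T.label q.1 then some .star else none
  | .and φ ψ, η =>
    pwsAdd (SEM T φ η) (pwsAdd (SEM T ψ η)
      (fun q => if q.2 = Formula.and φ ψ ∧ SEM T φ η (q.1, φ) ≠ none ∧ SEM T ψ η (q.1, ψ) ≠ none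
        then some .star else none))
  | .or φ ψ, η =>
    pwsAdd (SEM T φ η) (pwsAdd (SEM T ψ η) (pwsAdd
      (fun q => if q.2 = Formula.or φ ψ ∧ SEM T φ η (q.1, φ) ≠ none then some .one else none)
      (fun q => if q.2 = Formula.or φ ψ ∧ SEM T ψ η (q.1, ψ) ≠ none then some .two else none)))
  | .box a φ, η =>
    pwsAdd (SEM T φ η)
      (fun q => if q.2 = Formula.box a φ ∧ ∀ t, T.trans a q.1 t → SEM T φ η (t, φ) ≠ none
        then some .star else none)
  | .dia a φ, η =>
    pwsAdd (SEM T φ η)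
      (fun q =>
        if h : q.2 = Formula.dia a φ ∧ ∃ t, T.trans a q.1 t ∧ SEM T φ η (t, φ) ≠ none
        then some (.state h.2.choose) else none)
  | .mu X φ, η =>
    (fun sgn : PStrat S Var Prp Act =>
        pwsSubst (SEM T φ (Function.update η X {s | sgn (s, φ) ≠ none}))
          X (Formula.mu X φ) sgn)^[Fintype.card S + 1]
      (fun _ => none)
  | .nu X φ, η =>
    let U := T.sem (Formula.nu X φ) η
    let sg := SEM T φ (Function.update η X U)
    fun q =>
      if q.2 = Formula.nu X φ ∧ q.1 ∈ U then some .star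
      else if h : ∃ ψ, ψ ≠ Formula.var X ∧ q.2 = Formula.subst ψ X (Formula.nu X φ) ∧
          sg (q.1, ψ) ≠ none
      then sg (q.1, h.choose) else none


universe u₁ u₂ u₃ u₄

mutual
/-- Big-step semantics of the recursive fixpoint-iteration procedure `sem`. -/
inductive Computes {S : Type u₁} {Var : Type u₂} {Prp : Type u₃} {Act : Type u₄}
    (T : LTS S Prp Act) :
    Formula Var Prp Act → (Var → Set S) → Set S → Prop
  | var (X η) : Computes T (.var X) η (η X)
  | prop (P η) : Computes T (.prop P) η {s | P ∈ T.label s}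
  | and {φ ψ η U V} : Computes T φ η U → Computes T ψ η V → Computes T (.and φ ψ) η (U ∩ V)
  | or {φ ψ η U V} : Computes T φ η U → Computes T ψ η V → Computes T (.or φ ψ) η (U ∪ V)
  | box {φ η U} (a) : Computes T φ η U →
      Computes T (.box a φ) η {s | ∀ t, T.trans a s t → t ∈ U}
  | dia {φ η U} (a) : Computes T φ η U →
      Computes T (.dia a φ) η {s | ∃ t, T.trans a s t ∧ t ∈ U}
  | mu {X φ η U} : Iter T X φ η ∅ U → Computes T (.mu X φ) η U
  | nu {X φ η U} : Iter T X φ η Set.univ U → Computes T (.nu X φ) η U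

/-- Big-step semantics of `iter_X(φ, η, U)`: compute `U_p := sem(φ, η[X:=U])`;
if `U_p = U` return `U`, otherwise recurse on `U_p`. -/
inductive Iter {S : Type u₁} {Var : Type u₂} {Prp : Type u₃} {Act : Type u₄}
    (T : LTS S Prp Act) :
    Var → Formula Var Prp Act → (Var → Set S) → Set S → Set S → Prop
  | done {X φ η U} : Computes T φ (Function.update η X U) U → Iter T X φ η U U
  | step {X φ η U Up V} : Computes T φ (Function.update η X U) Up → Up ≠ U →
      Iter T X φ η Up V → Iter T X φ η U V
end

/-! The fixpoint cases are the only non-structural ones. The functional `U ↦ ⟦φ⟧η[X:=U]` is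
monotone, so the iteration started at `∅` climbs a strictly increasing chain that stays below
the least fixpoint (and the one started at `S` a strictly decreasing chain above the greatest).
Over a finite state set such a chain cannot go on forever, and where it stops it has reached a
fixpoint, which is then the extremal one. -/

namespace LTS

variable {S : Type u₁} {Var : Type u₂} {Prp : Type u₃} {Act : Type u₄} (T : LTS S Prp Act)

theorem sem_mono (φ : Formula Var Prp Act) : Monotone (T.sem φ) := by
  induction φ with
  | var X => exact fun η η' h => h X
  | prop P => exact monotone_const
  | dia a φ ih => exact fun η η' h s ⟨t, hst, ht⟩ => ⟨t, hst, ih h ht⟩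
  | box a φ ih => exact fun η η' h s hs t hst => ih h (hs t hst)
  | and φ ψ ihφ ihψ => exact fun η η' h => Set.inter_subset_inter (ihφ h) (ihψ h)
  | or φ ψ ihφ ihψ => exact fun η η' h => Set.union_subset_union (ihφ h) (ihψ h)
  | mu X φ ih =>
    exact fun η η' h => sInf_le_sInf fun U hU =>
      (ih (update_le_update_iff.2 ⟨le_rfl, fun Y _ => h Y⟩)).trans hU
  | nu X φ ih =>
    exact fun η η' h => sSup_le_sSup fun U hU =>
      hU.trans (ih (update_le_update_iff.2 ⟨le_rfl, fun Y _ => h Y⟩))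

noncomputable def unfold (φ : Formula Var Prp Act) (η : Var → Set S) (X : Var) :
    Set S →o Set S where
  toFun U := T.sem φ (Function.update η X U)
  monotone' _ _ h := T.sem_mono φ (update_le_update_iff'.2 h)

theorem sem_mu (X : Var) (φ : Formula Var Prp Act) (η : Var → Set S) :
    T.sem (.mu X φ) η = (T.unfold φ η X).lfp :=
  rfl

theorem sem_nu (X : Var) (φ : Formula Var Prp Act) (η : Var → Set S) :
    T.sem (.nu X φ) η = (T.unfold φ η X).gfp :=
  rfl

end LTS

namespace Iter

variable {S : Type u₁} {Var : Type u₂} {Prp : Type u₃} {Act : Type u₄} {T : LTS S Prp Act}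
  {X : Var} {φ : Formula Var Prp Act} {η : Var → Set S}

theorem of_unfold_eq (hφ : ∀ η', Computes T φ η' (T.sem φ η')) {U : Set S}
    (hU : T.unfold φ η X U = U) : Iter T X φ η U U := by
  have h : Computes T φ (Function.update η X U) (T.unfold φ η X U) := hφ _
  rw [hU] at h
  exact .done h

theorem of_le_lfp [Finite S] (hφ : ∀ η', Computes T φ η' (T.sem φ η')) (U : Set S)
    (hpost : U ≤ T.unfold φ η X U) (hle : U ≤ (T.unfold φ η X).lfp) :
    Iter T X φ η U (T.unfold φ η X).lfp := by
  induction U using WellFoundedGT.induction with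
  | _ U ih =>
  by_cases hfix : T.unfold φ η X U = U
  · rw [(OrderHom.lfp_le_fixed _ hfix).antisymm hle]
    exact of_unfold_eq hφ hfix
  · exact .step (hφ _) hfix (ih _ (lt_of_le_of_ne hpost (Ne.symm hfix))
      ((T.unfold φ η X).monotone hpost) (OrderHom.map_le_lfp _ hle))

theorem of_gfp_le [Finite S] (hφ : ∀ η', Computes T φ η' (T.sem φ η')) (U : Set S)
    (hpre : T.unfold φ η X U ≤ U) (hge : (T.unfold φ η X).gfp ≤ U) :
    Iter T X φ η U (T.unfold φ η X).gfp := by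
  induction U using WellFoundedLT.induction with
  | _ U ih =>
  by_cases hfix : T.unfold φ η X U = U
  · rw [hge.antisymm (OrderHom.le_gfp _ hfix.ge)]
    exact of_unfold_eq hφ hfix
  · exact .step (hφ _) hfix (ih _ (lt_of_le_of_ne hpre hfix)
      ((T.unfold φ η X).monotone hpre) (OrderHom.gfp_le_map _ hge))

end Iter

/-- over a finite state set the procedure `sem` terminates (there is a
big-step derivation) and computes the semantics: `sem(φ,η) = ⟦φ⟧η`. -/
theorem computes_sem {S : Type u₁} {Var : Type u₂} {Prp : Type u₃} {Act : Type u₄}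
    [Finite S] [Nonempty S] (T : LTS S Prp Act)
    (φ : Formula Var Prp Act) (η : Var → Set S) :
    Computes T φ η (T.sem φ η) := by
  induction φ generalizing η with
  | var X => exact .var X η
  | prop P => exact .prop P η
  | dia a φ ih => exact .dia a (ih η)
  | box a φ ih => exact .box a (ih η)
  | and φ ψ ihφ ihψ => exact .and (ihφ η) (ihψ η)
  | or φ ψ ihφ ihψ => exact .or (ihφ η) (ihψ η)
  | mu X φ ih =>
    rw [T.sem_mu]
    exact .mu (.of_le_lfp ih ∅ bot_le bot_le)
  | nu X φ ih =>
    rw [T.sem_nu]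
    exact .nu (.of_gfp_le ih .univ le_top le_top)

end MuCalc
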